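/- Let S = (ψ, A, B) be a strategy for a symmetric non-local game G = (X, ν, A, D), let ν_A be the marginal of ν on the first coordinate, and let ρ_A, ρ_B be the reduced density matrices of ψ on H_A, H_B. Let {Â^x_a} be POVMs on H_A and {B̂^y_b} be POVMs on H_B, and set γ_A = E_{x∼ν_A} Σ_a Tr((A^x_a − Â^x_a)² ρ_A) and γ_B = E_{y∼ν_A} Σ_b Tr((B^y_b − B̂^y_b)² ρ_B). Then the correlations C of S and Ĉ of Ŝ = (ψ, Â, B̂) satisfy E_{(x,y)∼ν} Σ_{a,b} |C_{x,y,a,b} − Ĉ_{x,y,a,b}| ≤ 12·dsync(S; ν_A) + 4·√γ_A + 4·√γ_B. -/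

import Mathlib

open scoped BigOperators Kronecker ComplexOrder
open Matrix

noncomputable section

abbrev Op (n : ℕ) := Matrix (Fin n) (Fin n) ℂ

def inn {I : Type*} [Fintype I] (v w : I → ℂ) : ℂ := ∑ i, star (v i) * w i

def nrm {I : Type*} [Fintype I] (v : I → ℂ) : ℝ := Real.sqrt (inn v v).re

def IsPOVM {n m : ℕ} (A : Fin m → Op n) : Prop :=
  (∀ a, (A a).PosSemidef) ∧ (∑ a, A a) = 1

def IsPVM {n m : ℕ} (A : Fin m → Op n) : Prop :=
  (∀ a, (A a).IsHermitian ∧ A a * A a = A a) ∧ (∑ a, A a) = 1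

structure Game (q m : ℕ) where
  nu : Fin q → Fin q → ℝ
  nu_nonneg : ∀ x y, 0 ≤ nu x y
  nu_sum : (∑ x, ∑ y, nu x y) = 1
  D : Fin m → Fin m → Fin q → Fin q → Bool

structure Strategy (q m nA nB : ℕ) where
  psi : Fin nA × Fin nB → ℂ
  psi_unit : inn psi psi = 1
  A : Fin q → Fin m → Op nA
  B : Fin q → Fin m → Op nB
  A_povm : ∀ x, IsPOVM (A x)
  B_povm : ∀ y, IsPOVM (B y)

def corrRaw {q m nA nB : ℕ} (psi : Fin nA × Fin nB → ℂ)
    (A : Fin q → Fin m → Op nA) (B : Fin q → Fin m → Op nB)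
    (x y : Fin q) (a b : Fin m) : ℂ :=
  inn psi ((A x a ⊗ₖ B y b).mulVec psi)

def Strategy.corr {q m nA nB : ℕ} (S : Strategy q m nA nB) :
    Fin q → Fin q → Fin m → Fin m → ℂ :=
  corrRaw S.psi S.A S.B

def winProbRaw {q m nA nB : ℕ} (G : Game q m) (psi : Fin nA × Fin nB → ℂ)
    (A : Fin q → Fin m → Op nA) (B : Fin q → Fin m → Op nB) : ℝ :=
  ∑ x, ∑ y, G.nu x y *
    ∑ a, ∑ b, (if G.D a b x y then (1:ℝ) else 0) * (corrRaw psi A B x y a b).re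

def winProb {q m nA nB : ℕ} (G : Game q m) (S : Strategy q m nA nB) : ℝ :=
  winProbRaw G S.psi S.A S.B

def qval {q m : ℕ} (G : Game q m) : ℝ :=
  sSup {w : ℝ | ∃ (nA nB : ℕ) (S : Strategy q m nA nB), winProb G S = w}

def margA {q : ℕ} (nu : Fin q → Fin q → ℝ) (x : Fin q) : ℝ := ∑ y, nu x y
def margB {q : ℕ} (nu : Fin q → Fin q → ℝ) (y : Fin q) : ℝ := ∑ x, nu x y

def dsyncRaw {q m nA nB : ℕ} (psi : Fin nA × Fin nB → ℂ)
    (A : Fin q → Fin m → Op nA) (B : Fin q → Fin m → Op nB) (mu : Fin q → ℝ) : ℝ :=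
  1 - ∑ x, mu x * ∑ a, (corrRaw psi A B x x a a).re

def Strategy.dsync {q m nA nB : ℕ} (S : Strategy q m nA nB) (mu : Fin q → ℝ) : ℝ :=
  dsyncRaw S.psi S.A S.B mu

def Game.Symm {q m : ℕ} (G : Game q m) : Prop :=
  (∀ x y, G.nu x y = G.nu y x) ∧ ∀ a b x y, G.D a b x y = G.D b a y x

def Game.Synchronous {q m : ℕ} (G : Game q m) : Prop :=
  G.Symm ∧ (∀ x, 0 < G.nu x x) ∧ ∀ x a b, a ≠ b → G.D a b x x = false

def Game.BetaSync {q m : ℕ} (G : Game q m) (β : ℝ) : Prop :=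
  G.Synchronous ∧ ∀ x, β * ∑ y, G.nu x y ≤ G.nu x x

def Game.Perfect {q m : ℕ} (G : Game q m) : Prop :=
  ∃ (nA nB : ℕ) (S : Strategy q m nA nB), winProb G S = 1

def IsPME {q m n : ℕ} (S : Strategy q m n n) : Prop :=
  (∀ x, IsPVM (S.A x)) ∧
  ∃ U : Op n, Uᴴ * U = 1 ∧
    (∀ p, S.psi p = ((Real.sqrt n)⁻¹ : ℂ) * ∑ i, U p.1 i * U p.2 i) ∧
    (∀ x a, S.B x a = U * (Uᴴ * S.A x a * U)ᵀ * Uᴴ)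

def dilTarget {nA nB kA kB : ℕ} (psi : Fin nA × Fin nB → ℂ)
    (aux : Fin kA × Fin kB → ℂ) :
    (Fin nA × Fin kA) × (Fin nB × Fin kB) → ℂ :=
  fun p => psi (p.1.1, p.2.1) * aux (p.1.2, p.2.2)

def DilIneqs {q m nA nB tA tB kA kB : ℕ}
    (S : Strategy q m nA nB) (T : Strategy q m tA tB)
    (VA : Matrix (Fin tA × Fin kA) (Fin nA) ℂ)
    (VB : Matrix (Fin tB × Fin kB) (Fin nB) ℂ)
    (aux : Fin kA × Fin kB → ℂ) (ε : ℝ) (mu : Fin q → Fin q → ℝ) : Prop :=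
  nrm (fun p => (VA ⊗ₖ VB).mulVec S.psi p - dilTarget T.psi aux p) ≤ ε ∧
  Real.sqrt (∑ x, margA mu x * ∑ a,
    (nrm (fun p => (VA ⊗ₖ VB).mulVec ((S.A x a ⊗ₖ (1 : Op nB)).mulVec S.psi) p
      - dilTarget ((T.A x a ⊗ₖ (1 : Op tB)).mulVec T.psi) aux p)) ^ 2) ≤ ε ∧
  Real.sqrt (∑ y, margB mu y * ∑ b,
    (nrm (fun p => (VA ⊗ₖ VB).mulVec (((1 : Op nA) ⊗ₖ S.B y b).mulVec S.psi) p
      - dilTarget (((1 : Op tA) ⊗ₖ T.B y b).mulVec T.psi) aux p)) ^ 2) ≤ ε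

def LocalDilation {q m nA nB tA tB : ℕ}
    (S : Strategy q m nA nB) (T : Strategy q m tA tB) (ε : ℝ)
    (mu : Fin q → Fin q → ℝ) : Prop :=
  ∃ (kA kB : ℕ) (VA : Matrix (Fin tA × Fin kA) (Fin nA) ℂ)
    (VB : Matrix (Fin tB × Fin kB) (Fin nB) ℂ) (aux : Fin kA × Fin kB → ℂ),
    VAᴴ * VA = 1 ∧ VBᴴ * VB = 1 ∧ inn aux aux = 1 ∧ DilIneqs S T VA VB aux ε mu

def SelfTestsPME {q m tA tB : ℕ} (G : Game q m) (T : Strategy q m tA tB)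
    (κ : ℝ → ℝ) (nuh : Fin q → Fin q → ℝ) : Prop :=
  ∀ ε : ℝ, 0 ≤ ε → ∀ (n : ℕ) (S : Strategy q m n n), IsPME S →
    qval G - ε ≤ winProb G S → LocalDilation S T (κ ε) nuh

def SelfTestsAll {q m tA tB : ℕ} (G : Game q m) (T : Strategy q m tA tB)
    (κ : ℝ → ℝ) (nuh : Fin q → Fin q → ℝ) : Prop :=
  ∀ ε : ℝ, 0 ≤ ε → ∀ (nA nB : ℕ) (S : Strategy q m nA nB),
    qval G - ε ≤ winProb G S → LocalDilation S T (κ ε) nuh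

def SelfTestsClass {q m tA tB : ℕ} (G : Game q m) (T : Strategy q m tA tB)
    (κ : ℝ → ℝ) (nuh : Fin q → Fin q → ℝ)
    (Cl : ∀ nA nB : ℕ, Strategy q m nA nB → Prop) : Prop :=
  ∀ ε : ℝ, 0 ≤ ε → ∀ (nA nB : ℕ) (S : Strategy q m nA nB), Cl nA nB S →
    qval G - ε ≤ winProb G S → LocalDilation S T (κ ε) nuh

def gamePoly {q m nA nB : ℕ} (G : Game q m) (S : Strategy q m nA nB) :
    Matrix (Fin nA × Fin nB) (Fin nA × Fin nB) ℂ :=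
  ∑ x, ∑ y, ∑ a, ∑ b,
    (((G.nu x y : ℝ) : ℂ) * (if G.D a b x y then 1 else 0)) • (S.A x a ⊗ₖ S.B y b)

def specGap {I : Type*} [Fintype I] [DecidableEq I] (M : Matrix I I ℂ) : ℝ :=
  if h : M.IsHermitian then
    (((Finset.univ.val.map h.eigenvalues).sort (· ≤ ·)).getD (Fintype.card I - 1) 0) -
    (((Finset.univ.val.map h.eigenvalues).sort (· ≤ ·)).getD (Fintype.card I - 2) 0)
  else 0

def rhoA {nA nB : ℕ} (psi : Fin nA × Fin nB → ℂ) : Op nA :=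
  Matrix.of fun i j => ∑ k, psi (i, k) * star (psi (j, k))

def rhoB {nA nB : ℕ} (psi : Fin nA × Fin nB → ℂ) : Op nB :=
  Matrix.of fun i j => ∑ k, psi (k, i) * star (psi (k, j))

def IsMaxEntG {I J : Type*} [Fintype I] [DecidableEq I] [Fintype J] (psi : I × J → ℂ) : Prop :=
  Fintype.card I = Fintype.card J ∧
  ∃ (e : I → I → ℂ) (f : I → J → ℂ),
    (∀ i j, inn (e i) (e j) = if i = j then 1 else 0) ∧
    (∀ i j, inn (f i) (f j) = if i = j then 1 else 0) ∧
    ∀ p, psi p = ((Real.sqrt (Fintype.card I))⁻¹ : ℂ) * ∑ i, e i p.1 * f i p.2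

def IsMaxEntIn {kA kB : ℕ} (v : Fin kA × Fin kB → ℂ) : Prop :=
  ∃ (d : ℕ), 0 < d ∧ ∃ (e : Fin d → Fin kA → ℂ) (f : Fin d → Fin kB → ℂ),
    (∀ i j, inn (e i) (e j) = if i = j then 1 else 0) ∧
    (∀ i j, inn (f i) (f j) = if i = j then 1 else 0) ∧
    ∀ p, v p = ((Real.sqrt d)⁻¹ : ℂ) * ∑ i, e i p.1 * f i p.2

def hsNorm {n : ℕ} (M : Op n) : ℝ := Real.sqrt (Mᴴ * M).trace.re

def traceNorm {n : ℕ} (M : Op n) : ℝ :=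
  ((Matrix.posSemidef_conjTranspose_mul_self M).1.eigenvectorUnitary.1 *
    diagonal (((↑) : ℝ → ℂ) ∘ ((Matrix.posSemidef_conjTranspose_mul_self M).1.eigenvalues · |>.sqrt)) *
    (star (Matrix.posSemidef_conjTranspose_mul_self M).1.eigenvectorUnitary : Op n)).trace.re


/-!
Identify `ψ` with its coefficient matrix `K`, so that `C x y a b = tr (Kᴴ A K Bᵀ)`.
Replace Alice's operators first. For fixed `x, y, a` the error `∑_b |tr (Kᴴ (A - Â) K Q_b)|`
is split along `1 = R + (1 - R)`, where `R = (B^x_a)ᵀ` is Bob's operator for the *same*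
question and answer. Each of the three blocks touching `R` is at most
`‖(A - Â) K‖₂ ‖K R‖₂` by Cauchy–Schwarz over the POVM `Q`, and the `(1 - R)` block is at most
`tr (Kᴴ A K (1 - R)) + tr (Kᴴ Â K (1 - R))`. Summed over `a`, the latter is twice the
asynchronicity at `x` up to one more cross term; as `∑_a ‖K (B^x_a)ᵀ‖₂² ≤ 1`, Cauchy–Schwarz
over `a` then gives `4 √γ_x + 2 dsync_x`. Bob's side is the same estimate for the state with the parties exchanged;
averaging over `ν`, whose marginals agree by symmetry, gives `4 √γ_A + 4 √γ_B + 4 dsync`.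
-/

section Frobenius

variable {I J : Type*} [Fintype I] [Fintype J]

def frobNormSq (X : Matrix I J ℂ) : ℝ := ∑ i, ∑ j, ‖X i j‖ ^ 2

lemma frobNormSq_nonneg (X : Matrix I J ℂ) : 0 ≤ frobNormSq X := by
  unfold frobNormSq; positivity

lemma frobNormSq_conjTranspose (X : Matrix I J ℂ) : frobNormSq Xᴴ = frobNormSq X := by
  simp [frobNormSq, Finset.sum_comm (γ := I)]

lemma frobNormSq_transpose (X : Matrix I J ℂ) : frobNormSq Xᵀ = frobNormSq X := by
  simp [frobNormSq, Finset.sum_comm (γ := I)]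

lemma re_trace_mul_conjTranspose (X : Matrix I J ℂ) : (X * Xᴴ).trace.re = frobNormSq X := by
  simp [Matrix.trace, Matrix.mul_apply, frobNormSq, Complex.re_sum, Complex.mul_conj,
    Complex.normSq_eq_norm_sq, -Complex.ofReal_pow]

lemma norm_trace_mul_le (X : Matrix I J ℂ) (Y : Matrix J I ℂ) :
    ‖(X * Y).trace‖ ≤ √(frobNormSq X) * √(frobNormSq Y) := by
  have hY : frobNormSq Y = ∑ i, ∑ j, ‖Y j i‖ ^ 2 := by
    rw [← frobNormSq_transpose]; rfl
  calc ‖(X * Y).trace‖ = ‖∑ p : I × J, X p.1 p.2 * Y p.2 p.1‖ := by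
        simp [Matrix.trace, Matrix.mul_apply, Fintype.sum_prod_type]
    _ ≤ ∑ p : I × J, ‖X p.1 p.2‖ * ‖Y p.2 p.1‖ := by
        simpa only [norm_mul] using norm_sum_le Finset.univ fun p : I × J => X p.1 p.2 * Y p.2 p.1
    _ ≤ √(∑ p : I × J, ‖X p.1 p.2‖ ^ 2) * √(∑ p : I × J, ‖Y p.2 p.1‖ ^ 2) :=
        Real.sum_mul_le_sqrt_mul_sqrt _ _ _
    _ = √(frobNormSq X) * √(frobNormSq Y) := by
        rw [hY, frobNormSq, Fintype.sum_prod_type, Fintype.sum_prod_type]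

end Frobenius

section PosSemidef

variable {I n : Type*} [Fintype I] [Fintype n]

lemma re_trace_mul_mul_conjTranspose_nonneg {P : Matrix n n ℂ} (hP : P.PosSemidef)
    (Y : Matrix I n ℂ) : 0 ≤ (Y * P * Yᴴ).trace.re :=
  (Complex.nonneg_iff.mp (hP.mul_mul_conjTranspose_same Y).trace_nonneg).1

lemma re_trace_mul_mul_conjTranspose_mono {P Q : Matrix n n ℂ} (hPQ : (Q - P).PosSemidef)
    (Y : Matrix I n ℂ) : (Y * P * Yᴴ).trace.re ≤ (Y * Q * Yᴴ).trace.re := by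
  have h := re_trace_mul_mul_conjTranspose_nonneg hPQ Y
  rw [Matrix.mul_sub, Matrix.sub_mul, Matrix.trace_sub, Complex.sub_re] at h
  linarith

variable [DecidableEq n]

lemma posSemidef_sub_mul_self {T : Matrix n n ℂ} (hT : T.PosSemidef) (hT1 : (1 - T).PosSemidef) :
    (T - T * T).PosSemidef := by
  have h : T - T * T = (1 - T)ᴴ * T * (1 - T) + Tᴴ * (1 - T) * T := by
    rw [hT1.isHermitian.eq, hT.isHermitian.eq]; noncomm_ring
  rw [h]
  exact (hT.conjTranspose_mul_mul_same _).add (hT1.conjTranspose_mul_mul_same _)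

lemma frobNormSq_mul_le_re_trace {T : Matrix n n ℂ} (hT : T.PosSemidef) (hT1 : (1 - T).PosSemidef)
    (X : Matrix I n ℂ) : frobNormSq (X * T) ≤ (X * T * Xᴴ).trace.re := by
  rw [← re_trace_mul_conjTranspose, Matrix.conjTranspose_mul, hT.isHermitian.eq,
    ← Matrix.mul_assoc, Matrix.mul_assoc X]
  exact re_trace_mul_mul_conjTranspose_mono (posSemidef_sub_mul_self hT hT1) X

lemma frobNormSq_mul_le {T : Matrix n n ℂ} (hT : T.PosSemidef) (hT1 : (1 - T).PosSemidef)
    (X : Matrix I n ℂ) : frobNormSq (X * T) ≤ frobNormSq X :=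
  calc frobNormSq (X * T) ≤ (X * T * Xᴴ).trace.re := frobNormSq_mul_le_re_trace hT hT1 X
    _ ≤ (X * (1 : Matrix n n ℂ) * Xᴴ).trace.re := re_trace_mul_mul_conjTranspose_mono hT1 X
    _ = frobNormSq X := by rw [Matrix.mul_one, re_trace_mul_conjTranspose]

end PosSemidef

section POVM

variable {n m : ℕ} {Q : Fin m → Op n}

lemma IsPOVM.posSemidef_one_sub (hQ : IsPOVM Q) (a : Fin m) : (1 - Q a).PosSemidef := by
  rw [← hQ.2, ← Finset.add_sum_erase _ _ (Finset.mem_univ a), add_sub_cancel_left]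
  exact Matrix.posSemidef_sum _ fun b _ => hQ.1 b

lemma IsPOVM.transpose (hQ : IsPOVM Q) : IsPOVM fun a => (Q a)ᵀ :=
  ⟨fun a => (hQ.1 a).transpose, by rw [← Matrix.transpose_sum, hQ.2, Matrix.transpose_one]⟩

lemma IsPOVM.sum_re_trace_mul_mul_conjTranspose {I : Type*} [Fintype I] (hQ : IsPOVM Q)
    (Y : Matrix I (Fin n) ℂ) : ∑ a, (Y * Q a * Yᴴ).trace.re = frobNormSq Y := by
  rw [← Complex.re_sum, ← Matrix.trace_sum, ← Matrix.sum_mul, ← Matrix.mul_sum, hQ.2,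
    Matrix.mul_one, re_trace_mul_conjTranspose]

open scoped MatrixOrder in
lemma IsPOVM.sum_norm_trace_mul_le {I : Type*} [Fintype I] (hQ : IsPOVM Q)
    (X : Matrix I (Fin n) ℂ) (Y : Matrix (Fin n) I ℂ) :
    ∑ b, ‖(X * Q b * Y).trace‖ ≤ √(frobNormSq X) * √(frobNormSq Y) := by
  -- With `Q b = Cᴴ C`, apply Cauchy–Schwarz to `tr ((X Cᴴ) (C Y))`: the squared norms of
  -- `X Cᴴ` and of `C Y` sum over `b` to those of `X` and of `Y`.
  choose C hC using fun b => CStarAlgebra.nonneg_iff_eq_star_mul_self.mp (hQ.1 b).nonneg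
  have hconj : ∀ (Z : Matrix I (Fin n) ℂ) b, frobNormSq (Z * (C b)ᴴ) = (Z * Q b * Zᴴ).trace.re := by
    intro Z b
    rw [← re_trace_mul_conjTranspose, hC, Matrix.star_eq_conjTranspose, Matrix.conjTranspose_mul,
      Matrix.conjTranspose_conjTranspose]
    simp only [Matrix.mul_assoc]
  have hX : ∑ b, frobNormSq (X * (C b)ᴴ) = frobNormSq X := by
    simp_rw [hconj, hQ.sum_re_trace_mul_mul_conjTranspose]
  have hY : ∑ b, frobNormSq (C b * Y) = frobNormSq Y := by
    rw [← frobNormSq_conjTranspose Y, ← hQ.sum_re_trace_mul_mul_conjTranspose Yᴴ]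
    refine Finset.sum_congr rfl fun b _ => ?_
    rw [← hconj, ← Matrix.conjTranspose_mul, frobNormSq_conjTranspose]
  calc ∑ b, ‖(X * Q b * Y).trace‖ = ∑ b, ‖((X * (C b)ᴴ) * (C b * Y)).trace‖ := by
        simp_rw [hC, Matrix.star_eq_conjTranspose, Matrix.mul_assoc]
    _ ≤ ∑ b, √(frobNormSq (X * (C b)ᴴ)) * √(frobNormSq (C b * Y)) :=
        Finset.sum_le_sum fun b _ => norm_trace_mul_le _ _
    _ ≤ √(frobNormSq X) * √(frobNormSq Y) := by
        rw [← hX, ← hY]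
        exact Real.sum_sqrt_mul_sqrt_le _ (fun b => frobNormSq_nonneg _)
          fun b => frobNormSq_nonneg _

end POVM

section Compression

variable {p r m : ℕ} (K : Matrix (Fin p) (Fin r) ℂ) {R : Op r} {Q : Fin m → Op r}

lemma sub_compression_eq {n : Type*} [Fintype n] [DecidableEq n] (H R : Matrix n n ℂ) :
    H - (1 - R) * H * (1 - R) = R * H * R + R * H * (1 - R) + (1 - R) * H * R := by
  noncomm_ring

lemma sum_norm_trace_sub_compression_le {M : Op p} (hM : M.IsHermitian) (hR : R.PosSemidef)
    (hR1 : (1 - R).PosSemidef) (hQ : IsPOVM Q) :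
    ∑ b, ‖(Kᴴ * M * K * Q b).trace - ((1 - R) * (Kᴴ * M * K) * (1 - R) * Q b).trace‖
      ≤ 3 * (√(frobNormSq (M * K)) * √(frobNormSq (K * R))) := by
  have hblocks : ∀ b, (Kᴴ * M * K * Q b).trace - ((1 - R) * (Kᴴ * M * K) * (1 - R) * Q b).trace
      = (M * K * R * Q b * (R * Kᴴ)).trace + (M * K * (1 - R) * Q b * (R * Kᴴ)).trace
        + (K * R * Q b * ((1 - R) * Kᴴ * M)).trace := by
    intro b
    rw [← Matrix.trace_sub, ← Matrix.sub_mul, sub_compression_eq]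
    simp only [Matrix.trace_mul_cycle _ (Q b)]
    simp only [Matrix.add_mul, Matrix.trace_add, Matrix.mul_assoc]
  have hRK : frobNormSq (R * Kᴴ) = frobNormSq (K * R) := by
    rw [← frobNormSq_conjTranspose, Matrix.conjTranspose_mul, Matrix.conjTranspose_conjTranspose,
      hR.isHermitian.eq]
  have hMKR : frobNormSq (M * K * R) ≤ frobNormSq (M * K) := frobNormSq_mul_le hR hR1 _
  have hMKR' : frobNormSq (M * K * (1 - R)) ≤ frobNormSq (M * K) := by
    refine frobNormSq_mul_le hR1 ?_ _
    rwa [sub_sub_cancel]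
  have hRKM : frobNormSq ((1 - R) * Kᴴ * M) = frobNormSq (M * K * (1 - R)) := by
    rw [← frobNormSq_conjTranspose, Matrix.conjTranspose_mul, Matrix.conjTranspose_mul,
      Matrix.conjTranspose_conjTranspose, hM.eq, hR1.isHermitian.eq, Matrix.mul_assoc]
  have hsplit : ∑ b, ‖(Kᴴ * M * K * Q b).trace - ((1 - R) * (Kᴴ * M * K) * (1 - R) * Q b).trace‖
      ≤ (∑ b, ‖(M * K * R * Q b * (R * Kᴴ)).trace‖)
        + (∑ b, ‖(M * K * (1 - R) * Q b * (R * Kᴴ)).trace‖)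
        + ∑ b, ‖(K * R * Q b * ((1 - R) * Kᴴ * M)).trace‖ := by
    simp only [hblocks, ← Finset.sum_add_distrib]
    exact Finset.sum_le_sum fun b _ => norm_add₃_le
  have h1 := hQ.sum_norm_trace_mul_le (M * K * R) (R * Kᴴ)
  have h2 := hQ.sum_norm_trace_mul_le (M * K * (1 - R)) (R * Kᴴ)
  have h3 := hQ.sum_norm_trace_mul_le (K * R) ((1 - R) * Kᴴ * M)
  rw [hRK] at h1 h2
  rw [hRKM] at h3
  have := Real.sqrt_le_sqrt hMKR
  have := Real.sqrt_le_sqrt hMKR'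
  have := Real.sqrt_nonneg (frobNormSq (K * R))
  nlinarith

open scoped MatrixOrder in
lemma sum_norm_trace_compression_le {F : Op p} {T : Op r} (hF : F.PosSemidef) (hT : T.PosSemidef)
    (hT1 : (1 - T).PosSemidef) (hQ : IsPOVM Q) :
    ∑ b, ‖(T * (Kᴴ * F * K) * T * Q b).trace‖ ≤ (Kᴴ * F * K * T).trace.re := by
  obtain ⟨C, rfl⟩ := CStarAlgebra.nonneg_iff_eq_star_mul_self.mp hF.nonneg
  rw [Matrix.star_eq_conjTranspose] at hF ⊢
  have hX : ∀ b, (T * (Kᴴ * (Cᴴ * C) * K) * T * Q b).trace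
      = (C * K * T * Q b * (C * K * T)ᴴ).trace := by
    intro b
    rw [show T * (Kᴴ * (Cᴴ * C) * K) * T * Q b = (T * Kᴴ * Cᴴ) * (C * K * T * Q b) by
      simp only [Matrix.mul_assoc], Matrix.trace_mul_comm]
    simp only [Matrix.conjTranspose_mul, hT.isHermitian.eq, Matrix.mul_assoc]
  calc ∑ b, ‖(T * (Kᴴ * (Cᴴ * C) * K) * T * Q b).trace‖
      ≤ √(frobNormSq (C * K * T)) * √(frobNormSq (C * K * T)ᴴ) := by
        simp only [hX]
        exact hQ.sum_norm_trace_mul_le _ _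
    _ = frobNormSq (C * K * T) := by
        rw [frobNormSq_conjTranspose, Real.mul_self_sqrt (frobNormSq_nonneg _)]
    _ ≤ (C * K * T * (C * K)ᴴ).trace.re := frobNormSq_mul_le_re_trace hT hT1 _
    _ = (Kᴴ * (Cᴴ * C) * K * T).trace.re := by
        rw [Matrix.trace_mul_comm]
        simp only [Matrix.conjTranspose_mul, Matrix.mul_assoc]

lemma sum_norm_trace_conj_sub_mul_le_compression {F F' : Op p} (hF : F.PosSemidef)
    (hF' : F'.PosSemidef) (hR : R.PosSemidef) (hR1 : (1 - R).PosSemidef) (hQ : IsPOVM Q) :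
    ∑ b, ‖(Kᴴ * (F - F') * K * Q b).trace‖
      ≤ 3 * (√(frobNormSq ((F - F') * K)) * √(frobNormSq (K * R)))
        + (Kᴴ * F * K * (1 - R)).trace.re + (Kᴴ * F' * K * (1 - R)).trace.re := by
  have hR' : (1 - (1 - R)).PosSemidef := by rwa [sub_sub_cancel]
  have hsplit : ∀ b, ((1 - R) * (Kᴴ * (F - F') * K) * (1 - R) * Q b).trace
      = ((1 - R) * (Kᴴ * F * K) * (1 - R) * Q b).trace
        - ((1 - R) * (Kᴴ * F' * K) * (1 - R) * Q b).trace := by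
    intro b
    simp only [Matrix.mul_sub, Matrix.sub_mul, Matrix.trace_sub]
    ring
  calc ∑ b, ‖(Kᴴ * (F - F') * K * Q b).trace‖
      ≤ (∑ b, ‖(Kᴴ * (F - F') * K * Q b).trace
          - ((1 - R) * (Kᴴ * (F - F') * K) * (1 - R) * Q b).trace‖)
        + (∑ b, ‖((1 - R) * (Kᴴ * F * K) * (1 - R) * Q b).trace‖)
        + ∑ b, ‖((1 - R) * (Kᴴ * F' * K) * (1 - R) * Q b).trace‖ := by
        simp only [← Finset.sum_add_distrib]
        refine Finset.sum_le_sum fun b _ => (norm_le_norm_sub_add _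
          ((1 - R) * (Kᴴ * (F - F') * K) * (1 - R) * Q b).trace).trans ?_
        rw [hsplit b, add_assoc]
        gcongr
        exact norm_sub_le _ _
    _ ≤ _ := by
        gcongr
        · exact sum_norm_trace_sub_compression_le K (hF.isHermitian.sub hF'.isHermitian) hR hR1 hQ
        · exact sum_norm_trace_compression_le K hF hR1 hR' hQ
        · exact sum_norm_trace_compression_le K hF' hR1 hR' hQ

lemma re_trace_conj_mul_le {M : Op p} (hM : M.IsHermitian) (R : Op r) :
    (Kᴴ * M * K * R).trace.re ≤ √(frobNormSq (M * K)) * √(frobNormSq (K * R)) := by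
  rw [← frobNormSq_conjTranspose (M * K), Matrix.conjTranspose_mul, hM.eq, Matrix.mul_assoc]
  exact (Complex.re_le_norm _).trans (norm_trace_mul_le _ _)

lemma sum_norm_trace_conj_sub_mul_le {F F' : Op p} (hF : F.PosSemidef) (hF' : F'.PosSemidef)
    (hR : R.PosSemidef) (hR1 : (1 - R).PosSemidef) (hQ : IsPOVM Q) :
    ∑ b, ‖(Kᴴ * (F - F') * K * Q b).trace‖
      ≤ 4 * (√(frobNormSq ((F - F') * K)) * √(frobNormSq (K * R)))
        + (Kᴴ * F * K).trace.re + (Kᴴ * F' * K).trace.re - 2 * (Kᴴ * F * K * R).trace.re := by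
  have h := sum_norm_trace_conj_sub_mul_le_compression K hF hF' hR hR1 hQ
  have hcross := re_trace_conj_mul_le K (hF.isHermitian.sub hF'.isHermitian) R
  simp only [Matrix.mul_sub, Matrix.sub_mul, Matrix.mul_one, Matrix.trace_sub,
    Complex.sub_re] at h hcross ⊢
  linarith

lemma sum_sum_norm_trace_conj_sub_mul_le (hK : frobNormSq K = 1) {k : ℕ} {F F' : Fin k → Op p}
    {G : Fin k → Op r} (hF : IsPOVM F) (hF' : IsPOVM F') (hG : IsPOVM G) (hQ : IsPOVM Q) :
    ∑ a, ∑ b, ‖(Kᴴ * (F a - F' a) * K * Q b).trace‖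
      ≤ 4 * √(∑ a, frobNormSq ((F a - F' a) * K))
        + 2 * (1 - ∑ a, (Kᴴ * F a * K * G a).trace.re) := by
  have htrace : ∀ {F : Fin k → Op p}, IsPOVM F → ∑ a, (Kᴴ * F a * K).trace.re = 1 := by
    intro F hF
    simpa [hK, frobNormSq_conjTranspose] using hF.sum_re_trace_mul_mul_conjTranspose Kᴴ
  have hKG : ∑ a, frobNormSq (K * G a) ≤ 1 :=
    calc ∑ a, frobNormSq (K * G a) ≤ ∑ a, (K * G a * Kᴴ).trace.re :=
          Finset.sum_le_sum fun a _ =>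
            frobNormSq_mul_le_re_trace (hG.1 a) (hG.posSemidef_one_sub a) K
      _ = 1 := by rw [hG.sum_re_trace_mul_mul_conjTranspose, hK]
  have hCS : ∑ a, √(frobNormSq ((F a - F' a) * K)) * √(frobNormSq (K * G a))
      ≤ √(∑ a, frobNormSq ((F a - F' a) * K)) :=
    calc _ ≤ √(∑ a, frobNormSq ((F a - F' a) * K)) * √(∑ a, frobNormSq (K * G a)) :=
          Real.sum_sqrt_mul_sqrt_le _ (fun a => frobNormSq_nonneg _) fun a => frobNormSq_nonneg _
      _ ≤ _ := mul_le_of_le_one_right (Real.sqrt_nonneg _) (Real.sqrt_le_one.mpr hKG)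
  calc ∑ a, ∑ b, ‖(Kᴴ * (F a - F' a) * K * Q b).trace‖
      ≤ ∑ a, (4 * (√(frobNormSq ((F a - F' a) * K)) * √(frobNormSq (K * G a)))
          + (Kᴴ * F a * K).trace.re + (Kᴴ * F' a * K).trace.re
          - 2 * (Kᴴ * F a * K * G a).trace.re) :=
        Finset.sum_le_sum fun a _ => sum_norm_trace_conj_sub_mul_le K (hF.1 a) (hF'.1 a) (hG.1 a)
          (hG.posSemidef_one_sub a) hQ
    _ = 4 * (∑ a, √(frobNormSq ((F a - F' a) * K)) * √(frobNormSq (K * G a)))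
          + (∑ a, (Kᴴ * F a * K).trace.re) + (∑ a, (Kᴴ * F' a * K).trace.re)
          - 2 * ∑ a, (Kᴴ * F a * K * G a).trace.re := by
        simp only [Finset.sum_add_distrib, Finset.sum_sub_distrib, Finset.mul_sum]
    _ ≤ _ := by
        rw [htrace hF, htrace hF']
        linarith

end Compression

section BipartiteState

variable {nA nB : ℕ}

def coeffMatrix (psi : Fin nA × Fin nB → ℂ) : Matrix (Fin nA) (Fin nB) ℂ :=
  Matrix.of fun i j => psi (i, j)

lemma trace_conjTranspose_transpose_mul {p r : ℕ} (K : Matrix (Fin p) (Fin r) ℂ) (X : Op p)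
    (Y : Op r) : ((Kᵀ)ᴴ * Y * Kᵀ * Xᵀ).trace = (Kᴴ * X * K * Yᵀ).trace := by
  rw [← Matrix.trace_transpose]
  simp only [Matrix.transpose_mul, Matrix.transpose_transpose, Matrix.transpose_conjTranspose]
  rw [show (K.map star)ᵀ = Kᴴ from rfl, ← Matrix.mul_assoc, ← Matrix.mul_assoc,
    Matrix.trace_mul_comm]
  simp only [Matrix.mul_assoc]

lemma inn_kronecker_mulVec (psi : Fin nA × Fin nB → ℂ) (X : Op nA) (Y : Op nB) :
    inn psi ((X ⊗ₖ Y).mulVec psi)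
      = ((coeffMatrix psi)ᴴ * X * coeffMatrix psi * Yᵀ).trace := by
  set K := coeffMatrix psi
  -- `psi` is `vec Kᵀ` in Mathlib's column-stacking convention.
  calc inn psi ((X ⊗ₖ Y).mulVec psi) = star (Matrix.vec Kᵀ) ⬝ᵥ Matrix.vec (Y * Kᵀ * Xᵀ) := by
        rw [← Matrix.kronecker_mulVec_vec]; rfl
    _ = ((Kᵀ)ᴴ * (Y * Kᵀ * Xᵀ)).trace := Matrix.star_vec_dotProduct_vec _ _
    _ = (Kᴴ * X * K * Yᵀ).trace := by
        rw [← trace_conjTranspose_transpose_mul]; simp only [Matrix.mul_assoc]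

lemma frobNormSq_coeffMatrix (psi : Fin nA × Fin nB → ℂ) :
    frobNormSq (coeffMatrix psi) = (inn psi psi).re := by
  simp [frobNormSq, coeffMatrix, inn, Complex.re_sum, Fintype.sum_prod_type, Complex.sq_norm,
    Complex.normSq_apply]

lemma rhoA_eq_mul_conjTranspose (psi : Fin nA × Fin nB → ℂ) :
    rhoA psi = coeffMatrix psi * (coeffMatrix psi)ᴴ := by
  ext i j
  simp [rhoA, coeffMatrix, Matrix.mul_apply]

lemma coeffMatrix_comp_swap (psi : Fin nA × Fin nB → ℂ) :
    coeffMatrix (psi ∘ Prod.swap) = (coeffMatrix psi)ᵀ := rfl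

lemma inn_comp_swap (psi : Fin nA × Fin nB → ℂ) :
    inn (psi ∘ Prod.swap) (psi ∘ Prod.swap) = inn psi psi :=
  Fintype.sum_equiv (Equiv.prodComm _ _) _ _ fun _ => rfl

lemma rhoB_eq_rhoA_comp_swap (psi : Fin nA × Fin nB → ℂ) : rhoB psi = rhoA (psi ∘ Prod.swap) := rfl

end BipartiteState

section Correlations

variable {q m nA nB : ℕ} {psi : Fin nA × Fin nB → ℂ}

def dsyncAt (psi : Fin nA × Fin nB → ℂ) (A : Fin q → Fin m → Op nA) (B : Fin q → Fin m → Op nB)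
    (x : Fin q) : ℝ :=
  1 - ∑ a, (corrRaw psi A B x x a a).re

def povmDistSq {n : ℕ} (rho : Op n) (A A' : Fin m → Op n) : ℝ :=
  ∑ a, ((A a - A' a) * (A a - A' a) * rho).trace.re

lemma corrRaw_eq_trace (psi : Fin nA × Fin nB → ℂ) (A : Fin q → Fin m → Op nA)
    (B : Fin q → Fin m → Op nB) (x y : Fin q) (a b : Fin m) :
    corrRaw psi A B x y a b
      = ((coeffMatrix psi)ᴴ * A x a * coeffMatrix psi * (B y b)ᵀ).trace :=
  inn_kronecker_mulVec psi (A x a) (B y b)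

lemma corrRaw_comp_swap (psi : Fin nA × Fin nB → ℂ) (A : Fin q → Fin m → Op nA)
    (B : Fin q → Fin m → Op nB) (x y : Fin q) (a b : Fin m) :
    corrRaw (psi ∘ Prod.swap) B A y x b a = corrRaw psi A B x y a b := by
  rw [corrRaw_eq_trace, corrRaw_eq_trace, coeffMatrix_comp_swap, trace_conjTranspose_transpose_mul]

lemma dsyncAt_comp_swap (psi : Fin nA × Fin nB → ℂ) (A : Fin q → Fin m → Op nA)
    (B : Fin q → Fin m → Op nB) (x : Fin q) :
    dsyncAt (psi ∘ Prod.swap) B A x = dsyncAt psi A B x := by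
  simp only [dsyncAt, corrRaw_comp_swap]

lemma frobNormSq_mul_coeffMatrix {M : Op nA} (hM : M.IsHermitian) (psi : Fin nA × Fin nB → ℂ) :
    frobNormSq (M * coeffMatrix psi) = (M * M * rhoA psi).trace.re := by
  rw [← re_trace_mul_conjTranspose, Matrix.conjTranspose_mul, hM.eq, rhoA_eq_mul_conjTranspose,
    ← Matrix.mul_assoc, Matrix.trace_mul_cycle]
  simp only [Matrix.mul_assoc]

lemma povmDistSq_rhoA_nonneg (psi : Fin nA × Fin nB → ℂ) {A A' : Fin m → Op nA} (hA : IsPOVM A)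
    (hA' : IsPOVM A') :
    0 ≤ povmDistSq (rhoA psi) A A' :=
  Finset.sum_nonneg fun a _ =>
    frobNormSq_mul_coeffMatrix ((hA.1 a).isHermitian.sub (hA'.1 a).isHermitian) psi ▸
      frobNormSq_nonneg _

lemma povmDistSq_rhoB_nonneg (psi : Fin nA × Fin nB → ℂ) {B B' : Fin m → Op nB} (hB : IsPOVM B)
    (hB' : IsPOVM B') :
    0 ≤ povmDistSq (rhoB psi) B B' := by
  rw [rhoB_eq_rhoA_comp_swap]
  exact povmDistSq_rhoA_nonneg _ hB hB'

lemma re_corrRaw_nonneg {A : Fin q → Fin m → Op nA} {B : Fin q → Fin m → Op nB} {x y : Fin q}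
    {a b : Fin m} (hA : (A x a).PosSemidef) (hB : (B y b).PosSemidef) :
    0 ≤ (corrRaw psi A B x y a b).re :=
  (Complex.nonneg_iff.mp ((hA.kronecker hB).dotProduct_mulVec_nonneg psi)).1

lemma sum_sum_corrRaw {A : Fin q → Fin m → Op nA} {B : Fin q → Fin m → Op nB} {x y : Fin q}
    (hA : IsPOVM (A x)) (hB : IsPOVM (B y)) :
    ∑ a, ∑ b, corrRaw psi A B x y a b = inn psi psi := by
  simp only [corrRaw_eq_trace, ← Matrix.trace_sum, ← Matrix.mul_sum, ← Matrix.transpose_sum, hB.2,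
    ← Matrix.sum_mul, ← Matrix.mul_sum, hA.2]
  rw [← inn_kronecker_mulVec, Matrix.one_kronecker_one, Matrix.one_mulVec]

lemma dsyncAt_nonneg (hpsi : inn psi psi = 1) {A : Fin q → Fin m → Op nA}
    {B : Fin q → Fin m → Op nB} {x : Fin q} (hA : IsPOVM (A x)) (hB : IsPOVM (B x)) :
    0 ≤ dsyncAt psi A B x := by
  have hsum : ∑ a, ∑ b, (corrRaw psi A B x x a b).re = 1 := by
    simp only [← Complex.re_sum, sum_sum_corrRaw hA hB, hpsi, Complex.one_re]
  have hdiag : ∑ a, (corrRaw psi A B x x a a).re ≤ ∑ a, ∑ b, (corrRaw psi A B x x a b).re :=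
    Finset.sum_le_sum fun a _ => Finset.single_le_sum
      (fun b _ => re_corrRaw_nonneg (hA.1 a) (hB.1 b)) (Finset.mem_univ a)
  rw [dsyncAt]
  linarith

lemma dsyncRaw_eq_sum_mul_dsyncAt (psi : Fin nA × Fin nB → ℂ) (A : Fin q → Fin m → Op nA)
    (B : Fin q → Fin m → Op nB) {mu : Fin q → ℝ} (hmu : ∑ x, mu x = 1) :
    dsyncRaw psi A B mu = ∑ x, mu x * dsyncAt psi A B x := by
  simp only [dsyncRaw, dsyncAt, mul_sub, mul_one, Finset.sum_sub_distrib, hmu]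

lemma sum_sum_norm_corrRaw_sub_left_le (hpsi : inn psi psi = 1) {A A' : Fin q → Fin m → Op nA}
    {B B' : Fin q → Fin m → Op nB} {x y : Fin q} (hA : IsPOVM (A x)) (hA' : IsPOVM (A' x))
    (hB : IsPOVM (B x)) (hB' : IsPOVM (B' y)) :
    ∑ a, ∑ b, ‖corrRaw psi A B' x y a b - corrRaw psi A' B' x y a b‖
      ≤ 4 * √(povmDistSq (rhoA psi) (A x) (A' x)) + 2 * dsyncAt psi A B x := by
  have hK : frobNormSq (coeffMatrix psi) = 1 := by
    rw [frobNormSq_coeffMatrix, hpsi, Complex.one_re]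
  have hgamma : ∀ a, frobNormSq ((A x a - A' x a) * coeffMatrix psi)
      = ((A x a - A' x a) * (A x a - A' x a) * rhoA psi).trace.re := fun a =>
    frobNormSq_mul_coeffMatrix ((hA.1 a).isHermitian.sub (hA'.1 a).isHermitian) psi
  have h := sum_sum_norm_trace_conj_sub_mul_le _ hK hA hA' hB.transpose hB'.transpose
  simp only [hgamma] at h
  simpa only [povmDistSq, dsyncAt, corrRaw_eq_trace, ← Matrix.trace_sub, ← Matrix.sub_mul,
    ← Matrix.mul_sub] using h

lemma sum_sum_norm_corrRaw_sub_right_le (hpsi : inn psi psi = 1) {A A' : Fin q → Fin m → Op nA}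
    {B B' : Fin q → Fin m → Op nB} {x y : Fin q} (hA : IsPOVM (A y)) (hA' : IsPOVM (A' x))
    (hB : IsPOVM (B y)) (hB' : IsPOVM (B' y)) :
    ∑ a, ∑ b, ‖corrRaw psi A' B x y a b - corrRaw psi A' B' x y a b‖
      ≤ 4 * √(povmDistSq (rhoB psi) (B y) (B' y)) + 2 * dsyncAt psi A B y := by
  have h := sum_sum_norm_corrRaw_sub_left_le (psi := psi ∘ Prod.swap)
    (by rw [inn_comp_swap, hpsi]) hB hB' hA hA'
  rw [Finset.sum_comm]
  simpa only [corrRaw_comp_swap, dsyncAt_comp_swap, rhoB_eq_rhoA_comp_swap] using h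

lemma sum_sum_norm_corrRaw_sub_le (hpsi : inn psi psi = 1) {A A' : Fin q → Fin m → Op nA}
    {B B' : Fin q → Fin m → Op nB} (hA : ∀ x, IsPOVM (A x)) (hA' : ∀ x, IsPOVM (A' x))
    (hB : ∀ y, IsPOVM (B y)) (hB' : ∀ y, IsPOVM (B' y)) (x y : Fin q) :
    ∑ a, ∑ b, ‖corrRaw psi A B x y a b - corrRaw psi A' B' x y a b‖
      ≤ (4 * √(povmDistSq (rhoA psi) (A x) (A' x)) + 2 * dsyncAt psi A B x)
        + (4 * √(povmDistSq (rhoB psi) (B y) (B' y)) + 2 * dsyncAt psi A B y) :=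
  calc ∑ a, ∑ b, ‖corrRaw psi A B x y a b - corrRaw psi A' B' x y a b‖
      ≤ ∑ a, ∑ b, (‖corrRaw psi A B x y a b - corrRaw psi A' B x y a b‖
          + ‖corrRaw psi A' B x y a b - corrRaw psi A' B' x y a b‖) :=
        Finset.sum_le_sum fun a _ => Finset.sum_le_sum fun b _ =>
          norm_sub_le_norm_sub_add_norm_sub _ _ _
    _ = (∑ a, ∑ b, ‖corrRaw psi A B x y a b - corrRaw psi A' B x y a b‖)
          + ∑ a, ∑ b, ‖corrRaw psi A' B x y a b - corrRaw psi A' B' x y a b‖ := by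
        simp only [Finset.sum_add_distrib]
    _ ≤ _ := add_le_add
        (sum_sum_norm_corrRaw_sub_left_le hpsi (hA x) (hA' x) (hB x) (hB y))
        (sum_sum_norm_corrRaw_sub_right_le hpsi (hA y) (hA' x) (hB y) (hB' y))

end Correlations

section Averaging

lemma sum_mul_sqrt_le_sqrt_sum_mul {ι : Type*} (s : Finset ι) {w t : ι → ℝ} (hw : ∀ i, 0 ≤ w i)
    (ht : ∀ i, 0 ≤ t i) (hw1 : ∑ i ∈ s, w i = 1) :
    ∑ i ∈ s, w i * √(t i) ≤ √(∑ i ∈ s, w i * t i) :=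
  calc ∑ i ∈ s, w i * √(t i) = ∑ i ∈ s, √(w i) * √(w i * t i) := by
        refine Finset.sum_congr rfl fun i _ => ?_
        rw [Real.sqrt_mul (hw i), ← mul_assoc, Real.mul_self_sqrt (hw i)]
    _ ≤ √(∑ i ∈ s, w i) * √(∑ i ∈ s, w i * t i) :=
        Real.sum_sqrt_mul_sqrt_le s hw fun i => mul_nonneg (hw i) (ht i)
    _ = √(∑ i ∈ s, w i * t i) := by rw [hw1, Real.sqrt_one, one_mul]

variable {q m nA nB : ℕ}

lemma sum_sum_mul_add_eq (nu : Fin q → Fin q → ℝ) (f g : Fin q → ℝ) :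
    ∑ x, ∑ y, nu x y * (f x + g y) = ∑ x, margA nu x * f x + ∑ y, margB nu y * g y := by
  simp only [margA, margB, mul_add, Finset.sum_add_distrib, Finset.sum_mul]
  rw [Finset.sum_comm (f := fun x y => nu x y * g y)]

lemma Game.margA_nonneg (G : Game q m) (x : Fin q) : 0 ≤ margA G.nu x :=
  Finset.sum_nonneg fun y _ => G.nu_nonneg x y

lemma Game.margB_eq_margA (G : Game q m) (hG : ∀ x y, G.nu x y = G.nu y x) :
    margB G.nu = margA G.nu :=
  funext fun y => Finset.sum_congr rfl fun x _ => hG x y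

variable (S : Strategy q m nA nB) {mu : Fin q → ℝ}

lemma Strategy.dsync_nonneg (hmu : ∀ x, 0 ≤ mu x) (hmu1 : ∑ x, mu x = 1) : 0 ≤ S.dsync mu := by
  rw [Strategy.dsync, dsyncRaw_eq_sum_mul_dsyncAt _ _ _ hmu1]
  exact Finset.sum_nonneg fun x _ =>
    mul_nonneg (hmu x) (dsyncAt_nonneg S.psi_unit (S.A_povm x) (S.B_povm x))

lemma Strategy.sum_mul_sqrt_add_dsyncAt_le (hmu : ∀ x, 0 ≤ mu x) (hmu1 : ∑ x, mu x = 1)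
    {γ : Fin q → ℝ} (hγ : ∀ x, 0 ≤ γ x) :
    ∑ x, mu x * (4 * √(γ x) + 2 * dsyncAt S.psi S.A S.B x)
      ≤ 4 * √(∑ x, mu x * γ x) + 2 * S.dsync mu := by
  simp only [Strategy.dsync, dsyncRaw_eq_sum_mul_dsyncAt _ _ _ hmu1, mul_add,
    Finset.sum_add_distrib, mul_left_comm _ (4 : ℝ), mul_left_comm _ (2 : ℝ), ← Finset.mul_sum]
  gcongr
  exact sum_mul_sqrt_le_sqrt_sum_mul _ hmu hγ hmu1

end Averaging

/-- replacing the measurement operators of a strategy by nearby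
POVMs perturbs the correlation in a controlled way. -/
theorem stmt9 {q m nA nB : ℕ} (G : Game q m) (hsym : G.Symm)
    (S : Strategy q m nA nB)
    (Ah : Fin q → Fin m → Op nA) (Bh : Fin q → Fin m → Op nB)
    (hAh : ∀ x, IsPOVM (Ah x)) (hBh : ∀ y, IsPOVM (Bh y))
    (gA gB : ℝ)
    (hgA : gA = ∑ x, margA G.nu x * ∑ a,
      (((S.A x a - Ah x a) * (S.A x a - Ah x a) * rhoA S.psi).trace).re)
    (hgB : gB = ∑ y, margA G.nu y * ∑ b,
      (((S.B y b - Bh y b) * (S.B y b - Bh y b) * rhoB S.psi).trace).re) :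
    (∑ x, ∑ y, G.nu x y * ∑ a, ∑ b,
        ‖S.corr x y a b - corrRaw S.psi Ah Bh x y a b‖)
      ≤ 12 * S.dsync (margA G.nu) + 4 * Real.sqrt gA + 4 * Real.sqrt gB := by
  have hmu1 : ∑ x, margA G.nu x = 1 := G.nu_sum
  subst hgA hgB
  calc ∑ x, ∑ y, G.nu x y * ∑ a, ∑ b, ‖S.corr x y a b - corrRaw S.psi Ah Bh x y a b‖
      ≤ ∑ x, ∑ y, G.nu x y *
          ((4 * √(povmDistSq (rhoA S.psi) (S.A x) (Ah x)) + 2 * dsyncAt S.psi S.A S.B x)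
            + (4 * √(povmDistSq (rhoB S.psi) (S.B y) (Bh y)) + 2 * dsyncAt S.psi S.A S.B y)) := by
        gcongr with x _ y _
        · exact G.nu_nonneg x y
        · exact sum_sum_norm_corrRaw_sub_le S.psi_unit S.A_povm hAh S.B_povm hBh x y
    _ = ∑ x, margA G.nu x *
          (4 * √(povmDistSq (rhoA S.psi) (S.A x) (Ah x)) + 2 * dsyncAt S.psi S.A S.B x)
        + ∑ y, margA G.nu y *
          (4 * √(povmDistSq (rhoB S.psi) (S.B y) (Bh y)) + 2 * dsyncAt S.psi S.A S.B y) := by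
        rw [sum_sum_mul_add_eq, G.margB_eq_margA hsym.1]
    _ ≤ _ := by
        have hA := S.sum_mul_sqrt_add_dsyncAt_le G.margA_nonneg hmu1
          fun x => povmDistSq_rhoA_nonneg S.psi (S.A_povm x) (hAh x)
        have hB := S.sum_mul_sqrt_add_dsyncAt_le G.margA_nonneg hmu1
          fun y => povmDistSq_rhoB_nonneg S.psi (S.B_povm y) (hBh y)
        have hdsync := S.dsync_nonneg G.margA_nonneg hmu1
        unfold povmDistSq at hA hB ⊢
        linarith

end
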